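/- Let p, q, r be integers and let T = !![p, r; 0, q] over ℤ. Define g(p, q) to be the minimum of the set {g : ∃ a x d u ∈ ℤ, p = a² − x² ∧ q = d² − u² ∧ g = gcd(a+d, x+u) ∧ g > 0}. Then T can be written as A² − B² for some upper-triangular 2×2 integer matrices A and B if and only if: (1) p and q are each representable as a difference of two integer squares, and (2) g(p, q) divides r. -/

import Mathlib

/-!
For upper-triangular `A = !![a, s; 0, d]` and `B = !![x, t; 0, u]` the entry `(A² - B²)₀₁` is
`s (a + d) - t (x + u)`, so `!![p, r; 0, q]` is a difference of squares iff `r` is a multiple of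
`gcd (a + d) (x + u)` for some representations `p = a² - x²`, `q = d² - u²`. It remains to see
that the least of these gcds divides all of them. The residues of `p` and `q` modulo 16 fix the
parities of `a, x, d, u` (and their classes modulo 4 when `p ≡ q ≡ 4 mod 8`); this gives a
`D ∈ {1, 2, 4}` dividing `a + d` and `x + u` for every choice of representations, and in each case
an explicit choice attains `gcd (a + d) (x + u) = D`.
-/

/-- A 2×2 matrix is upper-triangular if its lower-left entry is 0. -/
def IsUpperTriangular {R : Type*} [Ring R] (A : Matrix (Fin 2) (Fin 2) R) : Prop :=
  A 1 0 = 0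

/-- `T` is representable as a difference of two squares of upper-triangular matrices. -/
def ReprDiffSqUT {R : Type*} [Ring R] (T : Matrix (Fin 2) (Fin 2) R) : Prop :=
  ∃ A B : Matrix (Fin 2) (Fin 2) R,
    IsUpperTriangular A ∧ IsUpperTriangular B ∧ T = A ^ 2 - B ^ 2

section Matrix

variable {R : Type*} [CommRing R]

lemma upperTriangular_sq (a s d : R) :
    !![a, s; 0, d] ^ 2 = !![a ^ 2, s * (a + d); 0, d ^ 2] := by
  rw [sq, Matrix.mul_fin_two]
  ext i j
  fin_cases i <;> fin_cases j <;> simp <;> ring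

lemma reprDiffSqUT_iff (p q r : R) :
    ReprDiffSqUT !![p, r; 0, q] ↔ ∃ a x d u s t : R,
      p = a ^ 2 - x ^ 2 ∧ q = d ^ 2 - u ^ 2 ∧ r = s * (a + d) - t * (x + u) := by
  constructor
  · rintro ⟨A, B, hA, hB, hT⟩
    rw [Matrix.eta_fin_two A, Matrix.eta_fin_two B, hA, hB, upperTriangular_sq,
      upperTriangular_sq] at hT
    refine ⟨A 0 0, B 0 0, A 1 1, B 1 1, A 0 1, B 0 1, ?_, ?_, ?_⟩
    · simpa using congrFun₂ hT 0 0
    · simpa using congrFun₂ hT 1 1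
    · simpa using congrFun₂ hT 0 1
  · rintro ⟨a, x, d, u, s, t, rfl, rfl, rfl⟩
    refine ⟨!![a, s; 0, d], !![x, t; 0, u], rfl, rfl, ?_⟩
    rw [upperTriangular_sq, upperTriangular_sq]
    ext i j
    fin_cases i <;> fin_cases j <;> simp

end Matrix

lemma sq_emod_sixteen (a : ℤ) :
    (a % 4 = 0 ∧ a ^ 2 % 16 = 0) ∨ (a % 4 = 2 ∧ a ^ 2 % 16 = 4) ∨ (a % 2 = 1 ∧ a ^ 2 % 8 = 1) := by
  have h : a ^ 2 % 16 = (a % 16) * (a % 16) % 16 := by rw [sq, Int.mul_emod]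
  have h0 : 0 ≤ a % 16 := Int.emod_nonneg a (by norm_num)
  have h16 : a % 16 < 16 := Int.emod_lt_of_pos a (by norm_num)
  interval_cases hr : a % 16 <;> omega

section DiffSq

variable {p q : ℤ}

lemma emod_four_ne_two_of_eq_sq_sub_sq {a x : ℤ} (h : p = a ^ 2 - x ^ 2) : p % 4 ≠ 2 := by
  have := sq_emod_sixteen a
  have := sq_emod_sixteen x
  omega

/-- The set whose minimum is `g(p, q)`. -/
def diffSqGcdSet (p q : ℤ) : Set ℕ :=
  {g : ℕ | ∃ a x d u : ℤ, p = a ^ 2 - x ^ 2 ∧ q = d ^ 2 - u ^ 2 ∧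
    g = Int.gcd (a + d) (x + u) ∧ g > 0}

lemma diffSqGcdSet_comm (p q : ℤ) : diffSqGcdSet p q = diffSqGcdSet q p := by
  have swap {p q : ℤ} : diffSqGcdSet p q ⊆ diffSqGcdSet q p := by
    rintro g ⟨a, x, d, u, hp, hq, rfl, hg⟩
    exact ⟨d, u, a, x, hq, hp, by rw [add_comm d, add_comm u], hg⟩
  exact swap.antisymm swap

lemma gcd_emod_mem_diffSqGcdSet {a x d u c : ℤ} (hp : p = a ^ 2 - x ^ 2)
    (hq : q = d ^ 2 - u ^ 2) (hc : a + d = x + u + c) (hc0 : c ≠ 0) :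
    Int.gcd ((x + u) % c) c ∈ diffSqGcdSet p q := by
  have h : Int.gcd (a + d) (x + u) = Int.gcd ((x + u) % c) c := by
    rw [Int.gcd_comm, hc, Int.gcd_self_add_right, Int.gcd_emod]
  exact ⟨a, x, d, u, hp, hq, h.symm, Int.gcd_pos_of_ne_zero_right _ hc0⟩

def DvdRepSums (p q D : ℤ) : Prop :=
  ∀ a x d u : ℤ, p = a ^ 2 - x ^ 2 → q = d ^ 2 - u ^ 2 → D ∣ a + d ∧ D ∣ x + u

lemma dvdRepSums_one (p q : ℤ) : DvdRepSums p q 1 :=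
  fun _ _ _ _ _ _ ↦ ⟨one_dvd _, one_dvd _⟩

lemma dvdRepSums_two
    (h : p % 2 = 1 ∧ p % 4 = q % 4 ∨ p % 8 = 4 ∧ q % 8 = 4 ∨ p % 16 = 8 ∧ q % 16 = 8) :
    DvdRepSums p q 2 := by
  intro a x d u hpa hqd
  have := sq_emod_sixteen a; have := sq_emod_sixteen x
  have := sq_emod_sixteen d; have := sq_emod_sixteen u
  omega

lemma dvdRepSums_four (hp : p % 8 = 4) (hpq : p % 16 = q % 16) : DvdRepSums p q 4 := by
  intro a x d u hpa hqd
  have := sq_emod_sixteen a; have := sq_emod_sixteen x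
  have := sq_emod_sixteen d; have := sq_emod_sixteen u
  omega

lemma sInf_diffSqGcdSet {D : ℕ} (hD : D ∈ diffSqGcdSet p q) (hdvd : DvdRepSums p q D) :
    sInf (diffSqGcdSet p q) = D := by
  refine le_antisymm (Nat.sInf_le hD) (le_csInf ⟨D, hD⟩ ?_)
  rintro g ⟨a, x, d, u, hp, hq, rfl, hg⟩
  obtain ⟨had, hxu⟩ := hdvd a x d u hp hq
  exact Nat.le_of_dvd hg (Int.natCast_dvd_natCast.mp (Int.dvd_coe_gcd had hxu))

lemma exists_mem_dvdRepSums_of_odd_of_odd (hp : p % 2 = 1) (hq : q % 2 = 1) :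
    ∃ D : ℕ, D ∈ diffSqGcdSet p q ∧ DvdRepSums p q D := by
  have hmem := gcd_emod_mem_diffSqGcdSet (p := p) (q := q) (a := p / 2 + 1) (x := p / 2)
    (d := q / 2 + 1) (u := q / 2) (c := 2) (by ring_nf; omega) (by ring_nf; omega) (by ring)
    (by norm_num)
  rcases Int.emod_two_eq_zero_or_one (p / 2 + q / 2) with h | h
  · exact ⟨2, by simpa [h, Int.gcd] using hmem, dvdRepSums_two (by omega)⟩
  · exact ⟨1, by simpa [h, Int.gcd] using hmem, dvdRepSums_one p q⟩

lemma one_mem_of_odd_of_emod_four (hp : p % 2 = 1) (hq : q % 4 = 0) :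
    1 ∈ diffSqGcdSet p q := by
  simpa using gcd_emod_mem_diffSqGcdSet (a := p / 2 + 1) (x := p / 2)
    (d := -(q / 4 + 1)) (u := 1 - q / 4) (c := -1) (by ring_nf; omega) (by ring_nf; omega)
    (by ring) (by norm_num)

lemma one_mem_of_emod_eight_of_emod_sixteen (hp : p % 8 = 0) (hq : q % 16 = 0) :
    1 ∈ diffSqGcdSet p q := by
  -- `16 n = (2 + 2 n)² - (2 - 2 n)²`, signed so that the two sums are odd and differ by 2.
  have hmem := gcd_emod_mem_diffSqGcdSet (p := p) (q := q) (a := p / 4 + 1) (x := p / 4 - 1)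
    (d := -(2 + q / 8)) (u := 2 - q / 8) (c := -2) (by ring_nf; omega) (by ring_nf; omega)
    (by ring) (by norm_num)
  have h : (p / 4 - 1 + (2 - q / 8)) % 2 = 1 := by omega
  simpa [Int.emod_neg, h] using hmem

lemma exists_mem_dvdRepSums_of_emod_four_of_emod_four (hp : p % 4 = 0) (hq : q % 4 = 0) :
    ∃ D : ℕ, D ∈ diffSqGcdSet p q ∧ DvdRepSums p q D := by
  by_cases hpq : p % 8 = 0 ∧ q % 16 = 0
  · exact ⟨1, one_mem_of_emod_eight_of_emod_sixteen hpq.1 hpq.2, dvdRepSums_one p q⟩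
  by_cases hqp : q % 8 = 0 ∧ p % 16 = 0
  · exact ⟨1, diffSqGcdSet_comm q p ▸ one_mem_of_emod_eight_of_emod_sixteen hqp.1 hqp.2,
      dvdRepSums_one p q⟩
  -- `4 P = (P + 1)² - (P - 1)²`; the two sums differ by 4.
  have hmem := gcd_emod_mem_diffSqGcdSet (p := p) (q := q) (a := p / 4 + 1) (x := p / 4 - 1)
    (d := q / 4 + 1) (u := q / 4 - 1) (c := 4) (by ring_nf; omega) (by ring_nf; omega)
    (by ring) (by norm_num)
  have : (p / 4 - 1 + (q / 4 - 1)) % 4 = 0 ∨ (p / 4 - 1 + (q / 4 - 1)) % 4 = 2 ∨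
      (p / 4 - 1 + (q / 4 - 1)) % 4 = 1 ∨ (p / 4 - 1 + (q / 4 - 1)) % 4 = 3 := by omega
  rcases this with h | h | h | h
  · exact ⟨4, by simpa [h, Int.gcd] using hmem, dvdRepSums_four (by omega) (by omega)⟩
  · exact ⟨2, by simpa [h, Int.gcd] using hmem, dvdRepSums_two (by omega)⟩
  all_goals exact ⟨1, by simpa [h, Int.gcd] using hmem, dvdRepSums_one p q⟩

lemma exists_mem_dvdRepSums {a x d u : ℤ} (hp : p = a ^ 2 - x ^ 2)
    (hq : q = d ^ 2 - u ^ 2) : ∃ D : ℕ, D ∈ diffSqGcdSet p q ∧ DvdRepSums p q D := by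
  have hp4 := emod_four_ne_two_of_eq_sq_sub_sq hp
  have hq4 := emod_four_ne_two_of_eq_sq_sub_sq hq
  by_cases hpo : p % 2 = 1 <;> by_cases hqo : q % 2 = 1
  · exact exists_mem_dvdRepSums_of_odd_of_odd hpo hqo
  · exact ⟨1, one_mem_of_odd_of_emod_four hpo (by omega), dvdRepSums_one p q⟩
  · exact ⟨1, diffSqGcdSet_comm q p ▸ one_mem_of_odd_of_emod_four hqo (by omega),
      dvdRepSums_one p q⟩
  · exact exists_mem_dvdRepSums_of_emod_four_of_emod_four (by omega) (by omega)

end DiffSq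

theorem g_pq_criterion (p q r : ℤ) :
    ReprDiffSqUT !![p, r; 0, q] ↔
      ((∃ x y : ℤ, p = x ^ 2 - y ^ 2) ∧ (∃ x y : ℤ, q = x ^ 2 - y ^ 2) ∧
        (((sInf {g : ℕ | ∃ a x d u : ℤ, p = a ^ 2 - x ^ 2 ∧ q = d ^ 2 - u ^ 2 ∧
          g = Int.gcd (a + d) (x + u) ∧ g > 0} : ℕ) : ℤ) ∣ r)) := by
  change _ ↔ _ ∧ _ ∧ ((sInf (diffSqGcdSet p q) : ℕ) : ℤ) ∣ r
  rw [reprDiffSqUT_iff]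
  constructor
  · rintro ⟨a, x, d, u, s, t, hp, hq, rfl⟩
    obtain ⟨D, hD, hdvd⟩ := exists_mem_dvdRepSums hp hq
    obtain ⟨had, hxu⟩ := hdvd a x d u hp hq
    rw [sInf_diffSqGcdSet hD hdvd]
    exact ⟨⟨a, x, hp⟩, ⟨d, u, hq⟩, dvd_sub (had.mul_left s) (hxu.mul_left t)⟩
  · rintro ⟨⟨a, x, hp⟩, ⟨d, u, hq⟩, hr⟩
    obtain ⟨D, hD, hdvd⟩ := exists_mem_dvdRepSums hp hq
    rw [sInf_diffSqGcdSet hD hdvd] at hr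
    obtain ⟨a, x, d, u, hp, hq, rfl, -⟩ := hD
    obtain ⟨c, rfl⟩ := hr
    refine ⟨a, x, d, u, c * Int.gcdA (a + d) (x + u), -(c * Int.gcdB (a + d) (x + u)), hp, hq, ?_⟩
    rw [Int.gcd_eq_gcd_ab]
    ring
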